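/- arXiv:0711.2549 — 2 statements merged into one kernel-verified Lean document; each statement's English description precedes it below -/
import Mathlib

section
/- Let I be an open interval containing 0 and let y : I → ℝ be differentiable with y'(t) = π(1 + y(t)²) for all t ∈ I and y(0) = v. Then for every t ∈ I one has π t + arctan v ∈ (−π/2, π/2) and y(t) = tan(π t + arctan v). In particular I ⊆ ((−π/2 − arctan v)/π, (π/2 − arctan v)/π). -/
open Real Set

/-!
Along a solution, `arctan ∘ y` has derivative `y' / (1 + y²) = π`, so `arctan (y t) - π t` is
constant on the interval `I`, i.e. `arctan (y t) = π t + arctan v`. Applying `tan` recovers `y t`,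
and the range `(-π/2, π/2)` of `arctan` confines `π t + arctan v`, hence `t`.
-/

theorem Convex.is_const_of_hasDerivWithinAt_zero {E : Type*} [NormedAddCommGroup E]
    [NormedSpace ℝ E] {f : ℝ → E} {s : Set ℝ} (hs : Convex ℝ s)
    (hf : ∀ x ∈ s, HasDerivWithinAt f 0 s x) {x y : ℝ} (hx : x ∈ s) (hy : y ∈ s) :
    f y = f x := by
  have h := hs.norm_image_sub_le_of_norm_hasDerivWithin_le (C := 0) hf
    (fun _ _ => norm_zero.le) hx hy
  rwa [zero_mul, norm_le_zero_iff, sub_eq_zero] at h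

theorem hasDerivAt_arctan_comp_sub_mul_of_riccati {y : ℝ → ℝ} {c t : ℝ}
    (hy : HasDerivAt y (c * (1 + y t ^ 2)) t) :
    HasDerivAt (fun s => arctan (y s) - c * s) 0 t := by
  have hpos : 1 + y t ^ 2 ≠ 0 := by positivity
  have harctan : HasDerivAt (fun s => arctan (y s)) c t := by
    convert hy.arctan using 1
    field_simp
  simpa only [sub_self] using harctan.fun_sub (hasDerivAt_const_mul c)

theorem arctan_eq_of_riccati {s : Set ℝ} (hs : s.OrdConnected) {y : ℝ → ℝ} {c t₀ : ℝ}
    (ht₀ : t₀ ∈ s) (hy : ∀ t ∈ s, HasDerivAt y (c * (1 + y t ^ 2)) t) {t : ℝ} (ht : t ∈ s) :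
    arctan (y t) = c * (t - t₀) + arctan (y t₀) := by
  have hconst := hs.convex.is_const_of_hasDerivWithinAt_zero
    (fun x hx => (hasDerivAt_arctan_comp_sub_mul_of_riccati (hy x hx)).hasDerivWithinAt)
    ht₀ ht
  linarith

theorem mem_Ioo_div_of_mul_add_mem_Ioo {c b l u t : ℝ} (hc : 0 < c)
    (h : c * t + b ∈ Ioo l u) : t ∈ Ioo ((l - b) / c) ((u - b) / c) := by
  have ht : t ∈ (c * ·) ⁻¹' ((· + b) ⁻¹' Ioo l u) := h
  rwa [preimage_add_const_Ioo, preimage_const_mul_Ioo₀ _ _ hc] at ht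

theorem first_order_reduction_solution_formula_general
    (I : Set ℝ) (hconn : I.OrdConnected) (h0 : (0 : ℝ) ∈ I)
    (y : ℝ → ℝ) (v : ℝ)
    (hy : ∀ t ∈ I, HasDerivAt y (π * (1 + y t ^ 2)) t)
    (hv : y 0 = v) :
    (∀ t ∈ I, π * t + Real.arctan v ∈ Set.Ioo (-(π / 2)) (π / 2) ∧
      y t = Real.tan (π * t + Real.arctan v)) ∧
    I ⊆ Set.Ioo ((-(π / 2) - Real.arctan v) / π) ((π / 2 - Real.arctan v) / π) := by
  have harctan : ∀ t ∈ I, arctan (y t) = π * t + arctan v := fun t ht => by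
    simpa [hv] using arctan_eq_of_riccati hconn h0 hy ht
  have hmem : ∀ t ∈ I, π * t + arctan v ∈ Ioo (-(π / 2)) (π / 2) := fun t ht =>
    harctan t ht ▸ ⟨neg_pi_div_two_lt_arctan _, arctan_lt_pi_div_two _⟩
  refine ⟨fun t ht => ⟨hmem t ht, ?_⟩,
    fun t ht => mem_Ioo_div_of_mul_add_mem_Ioo pi_pos (hmem t ht)⟩
  rw [← harctan t ht, tan_arctan]

/-- Any solution on an open interval `I ∋ 0` of `y' = π (1 + y²)`
with `y 0 = v` satisfies `π t + arctan v ∈ (−π/2, π/2)` and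
`y t = tan (π t + arctan v)` for all `t ∈ I`; in particular
`I ⊆ ((−π/2 − arctan v)/π, (π/2 − arctan v)/π)`. -/
theorem first_order_reduction_solution_formula
    (I : Set ℝ) (hI : IsOpen I) (hconn : I.OrdConnected) (h0 : (0 : ℝ) ∈ I)
    (y : ℝ → ℝ) (v : ℝ)
    (hy : ∀ t ∈ I, HasDerivAt y (π * (1 + y t ^ 2)) t)
    (hv : y 0 = v) :
    (∀ t ∈ I, π * t + Real.arctan v ∈ Set.Ioo (-(π / 2)) (π / 2) ∧
      y t = Real.tan (π * t + Real.arctan v)) ∧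
    I ⊆ Set.Ioo ((-(π / 2) - Real.arctan v) / π) ((π / 2 - Real.arctan v) / π) :=
  first_order_reduction_solution_formula_general I hconn h0 y v hy hv
end

section
/- Let 𝒮 : ℝⁿ × ℝⁿ → ℝⁿ be continuously differentiable, F(x,y) = (y, 𝒮(x,y)), p ∈ ℝⁿ, and let Φ be a continuously differentiable local flow of F on an open set Ω containing (0,(p,0)) (so Φ(0,z) = z and ∂Φ/∂t = F ∘ Φ on Ω). Then the derivative with respect to v of the map v ↦ pr₁ Φ(t, (p, v)) at v = 0 satisfies D_v[pr₁ Φ(t, (p, ·))](0) = t·Id + o(t) as t → 0; in particular this derivative is an invertible linear map of ℝⁿ for all sufficiently small t ≠ 0. -/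
open Topology Asymptotics

/-!
Let `q₀ = (p, 0)`. The Euler-step error `Φ (t, z) - z - t • F z` vanishes at `t = 0` and has time
derivative `F (Φ (t, z)) - F z`, whose `z`-derivative is continuous and vanishes at `t = 0`.
A mean value inequality in `z` and then one in `t` make this error `ε |t|`-Lipschitz in `z`
near `q₀`, so `∂_z Φ (t, q₀) = Id + t • DF (q₀) + o(t)`. For a second-order field `pr₁ ∘ F = pr₂`,
hence `pr₁ ∘ DF (q₀) ∘ inr = Id` while `pr₁ ∘ Id ∘ inr = 0`: the velocity derivative is
`t • Id + o(t)`. Divided by `t` it lies within `1/2` of `Id`, so it is invertible (Neumann series).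
-/

open Metric Filter

section

variable {V : Type*} [NormedAddCommGroup V] [NormedSpace ℝ V]

theorem fderiv_fst_apply_prodMk_right {E W W' : Type*} [NormedAddCommGroup E] [NormedSpace ℝ E]
    [NormedAddCommGroup W] [NormedSpace ℝ W] [NormedAddCommGroup W'] [NormedSpace ℝ W']
    {G : E × V → W × W'} {p : E} {v₀ : V} (hG : DifferentiableAt ℝ G (p, v₀)) :
    fderiv ℝ (fun v => (G (p, v)).1) v₀ =
      (ContinuousLinearMap.fst ℝ W W').comp ((fderiv ℝ G (p, v₀)).comp (.inr ℝ E V)) :=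
  (hG.hasFDerivAt.comp v₀ (hasFDerivAt_prodMk_right p v₀)).fst.fderiv

theorem fst_comp_fderiv_comp_inr_eq_id {F : V × V → V × V} (hF : ∀ q, (F q).1 = q.2)
    {q : V × V} (hd : DifferentiableAt ℝ F q) :
    (ContinuousLinearMap.fst ℝ V V).comp ((fderiv ℝ F q).comp (.inr ℝ V V)) = .id ℝ V := by
  have hfst : (ContinuousLinearMap.fst ℝ V V).comp (fderiv ℝ F q) = .snd ℝ V V :=
    hd.hasFDerivAt.fst.unique (by simpa only [hF] using hasFDerivAt_snd)
  rw [← ContinuousLinearMap.comp_assoc, hfst]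
  ext v
  simp

theorem exists_isUnit_of_isLittleO_sub_smul_id [CompleteSpace V] {A : ℝ → V →L[ℝ] V}
    (hA : (fun t => A t - t • ContinuousLinearMap.id ℝ V) =o[𝓝 0] fun t => t) :
    ∃ ε₀ > 0, ∀ t : ℝ, 0 < |t| → |t| < ε₀ → IsUnit (A t) := by
  obtain ⟨ε₀, hε₀, hsmall⟩ := Metric.eventually_nhds_iff.1 (isLittleO_iff.1 hA one_half_pos)
  refine ⟨ε₀, hε₀, fun t ht₀ ht => ?_⟩
  have ht0 : t ≠ 0 := abs_pos.1 ht₀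
  have hclose : ‖t⁻¹ • (t • 1 - A t)‖ < 1 := by
    have := hsmall (show dist t 0 < ε₀ by simpa using ht)
    rw [norm_smul, norm_inv, norm_sub_rev]
    calc ‖t‖⁻¹ * ‖A t - t • 1‖ ≤ ‖t‖⁻¹ * (1 / 2 * ‖t‖) := by gcongr; exact this
      _ < 1 := by field_simp; norm_num
  have hunit : IsUnit (t⁻¹ • A t) := by
    convert (Units.oneSub _ hclose).isUnit using 1
    rw [Units.val_oneSub, smul_sub, smul_smul, inv_mul_cancel₀ ht0, one_smul, sub_sub_cancel]
  simpa [Units.smul_def, smul_smul, mul_inv_cancel₀ ht0] using hunit.smul (Units.mk0 t ht0)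

end

structure IsLocalFlow {E : Type*} [NormedAddCommGroup E] [NormedSpace ℝ E]
    (F : E → E) (Φ : ℝ × E → E) (Ω : Set (ℝ × E)) : Prop where
  isOpen : IsOpen Ω
  contDiffOn : ContDiffOn ℝ 1 Φ Ω
  apply_zero : ∀ z, ((0 : ℝ), z) ∈ Ω → Φ (0, z) = z
  hasDerivAt : ∀ q ∈ Ω, HasDerivAt (fun t => Φ (t, q.2)) (F (Φ q)) q.1

namespace IsLocalFlow

variable {E : Type*} [NormedAddCommGroup E] [NormedSpace ℝ E]
  {F : E → E} {Φ : ℝ × E → E} {Ω : Set (ℝ × E)}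

theorem hasFDerivAt_right (h : IsLocalFlow F Φ Ω) {s : ℝ} {z : E} (hq : (s, z) ∈ Ω) :
    HasFDerivAt (fun z => Φ (s, z)) ((fderiv ℝ Φ (s, z)).comp (.inr ℝ ℝ E)) z :=
  ((h.contDiffOn.differentiableOn one_ne_zero).differentiableAt
    (h.isOpen.mem_nhds hq)).hasFDerivAt.comp z (hasFDerivAt_prodMk_right s z)

theorem fderiv_comp_inr_zero (h : IsLocalFlow F Φ Ω) {z : E} (hq : ((0 : ℝ), z) ∈ Ω) :
    (fderiv ℝ Φ (0, z)).comp (.inr ℝ ℝ E) = .id ℝ E := by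
  refine (h.hasFDerivAt_right hq).unique <| (hasFDerivAt_id z).congr_of_eventuallyEq ?_
  filter_upwards [(continuous_const.prodMk continuous_id).continuousAt.preimage_mem_nhds
    (h.isOpen.mem_nhds hq)] with z' hz' using h.apply_zero z' hz'

-- `∂_z (F (Φ (s, z)) - F z)` at `q = (s, z)`
noncomputable def defectFDeriv (F : E → E) (Φ : ℝ × E → E) (q : ℝ × E) : E →L[ℝ] E :=
  (fderiv ℝ F (Φ q)).comp ((fderiv ℝ Φ q).comp (.inr ℝ ℝ E)) - fderiv ℝ F q.2

theorem hasFDerivAt_defect (h : IsLocalFlow F Φ Ω) (hF : ContDiff ℝ 1 F) {s : ℝ} {z : E}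
    (hq : (s, z) ∈ Ω) :
    HasFDerivAt (fun z => F (Φ (s, z)) - F z) (defectFDeriv F Φ (s, z)) z :=
  ((hF.differentiable one_ne_zero _).hasFDerivAt.comp z (h.hasFDerivAt_right hq)).sub
    (hF.differentiable one_ne_zero z).hasFDerivAt

theorem continuousOn_defectFDeriv (h : IsLocalFlow F Φ Ω) (hF : ContDiff ℝ 1 F) :
    ContinuousOn (defectFDeriv F Φ) Ω := by
  have hDF := hF.continuous_fderiv one_ne_zero
  exact (hDF.comp_continuousOn h.contDiffOn.continuousOn).clm_comp
    ((h.contDiffOn.continuousOn_fderiv_of_isOpen h.isOpen le_rfl).clm_comp continuousOn_const)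
    |>.sub (hDF.comp continuous_snd).continuousOn

theorem defectFDeriv_time_zero (h : IsLocalFlow F Φ Ω) {z : E} (hq : ((0 : ℝ), z) ∈ Ω) :
    defectFDeriv F Φ (0, z) = 0 := by
  simp [defectFDeriv, h.apply_zero z hq, h.fderiv_comp_inr_zero hq]

theorem norm_defect_sub_le (h : IsLocalFlow F Φ Ω) (hF : ContDiff ℝ 1 F) {q₀ : E} {δ ε : ℝ}
    (hδ : ∀ s ∈ ball (0 : ℝ) δ, ∀ z ∈ ball q₀ δ, (s, z) ∈ Ω ∧ ‖defectFDeriv F Φ (s, z)‖ ≤ ε)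
    {s : ℝ} (hs : s ∈ ball 0 δ) {z : E} (hz : z ∈ ball q₀ δ) :
    ‖(F (Φ (s, z)) - F z) - (F (Φ (s, q₀)) - F q₀)‖ ≤ ε * ‖z - q₀‖ :=
  (convex_ball q₀ δ).norm_image_sub_le_of_norm_hasFDerivWithin_le
    (fun z hz => (h.hasFDerivAt_defect hF (hδ s hs z hz).1).hasFDerivWithinAt)
    (fun z hz => (hδ s hs z hz).2) (mem_ball_self (pos_of_mem_ball hz)) hz

theorem norm_sub_eulerStep_sub_le (h : IsLocalFlow F Φ Ω) (hF : ContDiff ℝ 1 F) {q₀ : E}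
    {δ ε : ℝ}
    (hδ : ∀ s ∈ ball (0 : ℝ) δ, ∀ z ∈ ball q₀ δ, (s, z) ∈ Ω ∧ ‖defectFDeriv F Φ (s, z)‖ ≤ ε)
    {t : ℝ} (ht : t ∈ ball 0 δ) {z : E} (hz : z ∈ ball q₀ δ) :
    ‖(Φ (t, z) - z - t • F z) - (Φ (t, q₀) - q₀ - t • F q₀)‖ ≤ ε * ‖z - q₀‖ * |t| := by
  have hq₀ : q₀ ∈ ball q₀ δ := mem_ball_self (pos_of_mem_ball hz)
  have hderiv : ∀ s ∈ ball (0 : ℝ) δ, HasDerivWithinAt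
      (fun s => (Φ (s, z) - s • F z) - (Φ (s, q₀) - s • F q₀))
      ((F (Φ (s, z)) - F z) - (F (Φ (s, q₀)) - F q₀)) (ball 0 δ) s := fun s hs =>
    (((h.hasDerivAt _ (hδ s hs z hz).1).sub ((hasDerivAt_id s).smul_const (F z))).sub
      ((h.hasDerivAt _ (hδ s hs q₀ hq₀).1).sub
        ((hasDerivAt_id s).smul_const (F q₀)))).hasDerivWithinAt.congr_deriv (by simp)
  have := (convex_ball (0 : ℝ) δ).norm_image_sub_le_of_norm_hasDerivWithin_le hderiv
    (fun s hs => norm_defect_sub_le h hF hδ hs hz) (mem_ball_self (pos_of_mem_ball ht)) ht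
  rw [h.apply_zero z (hδ 0 (mem_ball_self (pos_of_mem_ball ht)) z hz).1,
    h.apply_zero q₀ (hδ 0 (mem_ball_self (pos_of_mem_ball ht)) q₀ hq₀).1, sub_zero,
    Real.norm_eq_abs] at this
  convert this using 2
  module

theorem norm_fderiv_right_sub_le (h : IsLocalFlow F Φ Ω) (hF : ContDiff ℝ 1 F) {q₀ : E}
    {δ ε : ℝ}
    (hδ : ∀ s ∈ ball (0 : ℝ) δ, ∀ z ∈ ball q₀ δ, (s, z) ∈ Ω ∧ ‖defectFDeriv F Φ (s, z)‖ ≤ ε)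
    {t : ℝ} (ht : t ∈ ball 0 δ) :
    ‖fderiv ℝ (fun z => Φ (t, z)) q₀ - (.id ℝ E + t • fderiv ℝ F q₀)‖ ≤ ε * |t| := by
  have hδ₀ : 0 < δ := pos_of_mem_ball ht
  have hq₀ := hδ t ht q₀ (mem_ball_self hδ₀)
  have hderiv : HasFDerivAt (fun z => Φ (t, z) - z - t • F z)
      (fderiv ℝ (fun z => Φ (t, z)) q₀ - (.id ℝ E + t • fderiv ℝ F q₀)) q₀ := by
    rw [sub_add_eq_sub_sub]
    exact ((h.hasFDerivAt_right hq₀.1).differentiableAt.hasFDerivAt.sub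
      (hasFDerivAt_id q₀)).sub ((hF.differentiable one_ne_zero q₀).hasFDerivAt.const_smul t)
  refine hderiv.le_of_lip' (mul_nonneg ((norm_nonneg _).trans hq₀.2) (abs_nonneg t)) ?_
  filter_upwards [ball_mem_nhds q₀ hδ₀] with z hz
  linarith [norm_sub_eulerStep_sub_le h hF hδ ht hz]

theorem isLittleO_fderiv_right_sub (h : IsLocalFlow F Φ Ω) (hF : ContDiff ℝ 1 F) {q₀ : E}
    (hq₀ : ((0 : ℝ), q₀) ∈ Ω) :
    (fun t : ℝ => fderiv ℝ (fun z => Φ (t, z)) q₀ - (.id ℝ E + t • fderiv ℝ F q₀))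
      =o[𝓝 0] fun t => t := by
  refine isLittleO_iff.2 fun ε hε => ?_
  have hsmall : ∀ᶠ q in 𝓝 ((0 : ℝ), q₀), q ∈ Ω ∧ ‖defectFDeriv F Φ q‖ ≤ ε := by
    have hcont := (h.continuousOn_defectFDeriv hF).continuousAt (h.isOpen.mem_nhds hq₀)
    rw [ContinuousAt, h.defectFDeriv_time_zero hq₀] at hcont
    exact (h.isOpen.eventually_mem hq₀).and
      (hcont.norm.eventually (ge_mem_nhds (by simpa using hε)))
  obtain ⟨δ, hδ₀, hδ⟩ := Metric.eventually_nhds_iff_ball.1 hsmall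
  filter_upwards [ball_mem_nhds 0 hδ₀] with t ht
  rw [Real.norm_eq_abs]
  exact norm_fderiv_right_sub_le h hF
    (fun s hs z hz => hδ (s, z) (by rw [← ball_prod_same]; exact ⟨hs, hz⟩)) ht

theorem isLittleO_fderiv_fst_sub_smul_id {V : Type*} [NormedAddCommGroup V] [NormedSpace ℝ V]
    {F : V × V → V × V} {Φ : ℝ × (V × V) → V × V} {Ω : Set (ℝ × (V × V))}
    (h : IsLocalFlow F Φ Ω) (hF : ContDiff ℝ 1 F) (hsecond : ∀ q, (F q).1 = q.2) {p : V}
    (hp : ((0 : ℝ), (p, (0 : V))) ∈ Ω) :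
    (fun t : ℝ => fderiv ℝ (fun v : V => (Φ (t, (p, v))).1) 0 - t • ContinuousLinearMap.id ℝ V)
      =o[𝓝 0] fun t => t := by
  let L : (V × V →L[ℝ] V × V) →L[ℝ] (V →L[ℝ] V) :=
    (ContinuousLinearMap.compL ℝ V (V × V) V (.fst ℝ V V)).comp
      ((ContinuousLinearMap.compL ℝ V (V × V) (V × V)).flip (.inr ℝ V V))
  have hL : ∀ A, L A = (ContinuousLinearMap.fst ℝ V V).comp (A.comp (.inr ℝ V V)) := fun _ => rfl
  refine ((L.isBigO_comp _ _).trans_isLittleO (h.isLittleO_fderiv_right_sub hF hp)).congr' ?_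
    EventuallyEq.rfl
  have hcurve : Continuous fun t : ℝ => (t, (p, (0 : V))) := by fun_prop
  filter_upwards [hcurve.continuousAt.preimage_mem_nhds (h.isOpen.mem_nhds hp)] with t ht
  rw [fderiv_fst_apply_prodMk_right (G := fun z => Φ (t, z))
    (h.hasFDerivAt_right ht).differentiableAt, map_sub, map_add,
    map_smul, hL, hL, hL, fst_comp_fderiv_comp_inr_eq_id hsecond
      (hF.differentiable one_ne_zero _)]
  ext v
  simp

end IsLocalFlow

/-- With `𝒮` a `C¹` SODE, `F(x,y) = (y, 𝒮(x,y))` and `Φ` a `C¹`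
local flow of `F` near `(0,(p,0))`, the derivative at `v = 0` of the map
`v ↦ pr₁ Φ(t,(p,v))` equals `t·Id + o(t)` as `t → 0`; in particular it is an
invertible linear map of `ℝⁿ` for all sufficiently small `t ≠ 0`. -/
theorem derivative_of_exponential_is_t_Id_plus_little_o
    (n : ℕ)
    (S : (Fin n → ℝ) × (Fin n → ℝ) → (Fin n → ℝ))
    (hS : ContDiff ℝ 1 S)
    (F : (Fin n → ℝ) × (Fin n → ℝ) → (Fin n → ℝ) × (Fin n → ℝ))
    (hF : ∀ x y, F (x, y) = (y, S (x, y)))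
    (p : Fin n → ℝ)
    (Ω : Set (ℝ × ((Fin n → ℝ) × (Fin n → ℝ))))
    (hΩ : IsOpen Ω)
    (hmem : ((0 : ℝ), (p, (0 : Fin n → ℝ))) ∈ Ω)
    (Φ : ℝ × ((Fin n → ℝ) × (Fin n → ℝ)) → (Fin n → ℝ) × (Fin n → ℝ))
    (hΦC1 : ContDiffOn ℝ 1 Φ Ω)
    (hΦ0 : ∀ z, ((0 : ℝ), z) ∈ Ω → Φ (0, z) = z)
    (hΦflow : ∀ q ∈ Ω, HasDerivAt (fun t => Φ (t, q.2)) (F (Φ q)) q.1) :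
    (fun t : ℝ =>
        fderiv ℝ (fun v : Fin n → ℝ => (Φ (t, (p, v))).1) 0 -
          t • ContinuousLinearMap.id ℝ (Fin n → ℝ))
      =o[𝓝 (0 : ℝ)] (fun t : ℝ => t) ∧
    ∃ ε₀ > 0, ∀ t : ℝ, 0 < |t| → |t| < ε₀ →
      IsUnit (fderiv ℝ (fun v : Fin n → ℝ => (Φ (t, (p, v))).1) 0) := by
  have hFeq : F = fun q => (q.2, S q) := funext fun q => hF q.1 q.2
  have hFC1 : ContDiff ℝ 1 F := hFeq ▸ contDiff_snd.prodMk hS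
  have hflow : IsLocalFlow F Φ Ω := ⟨hΩ, hΦC1, hΦ0, hΦflow⟩
  have hlo := hflow.isLittleO_fderiv_fst_sub_smul_id hFC1 (by simp [hFeq]) hmem
  exact ⟨hlo, exists_isUnit_of_isLittleO_sub_smul_id hlo⟩
end
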